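/- arXiv:2103.16728 — 2 statements merged into one kernel-verified Lean document; each statement's English description precedes it below -/
import Mathlib

section
/- Stampacchia's iteration lemma: Let φ : [k₀, ∞) → [0, ∞) be nonincreasing, and suppose there exist constants C > 0, p > 0, and γ > 1 such that for all h > k ≥ k₀ one has φ(h) ≤ C (h − k)^{−p} φ(k)^γ. Then φ(k₀ + d) = 0, where d^p = C φ(k₀)^{γ−1} 2^{pγ/(γ−1)}. -/
open Real

/-- Stampacchia's iteration lemma. -/
theorem stampacchia_lemma
    (k₀ C p γ : ℝ) (hC : 0 < C) (hp : 0 < p) (hγ : 1 < γ)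
    (φ : ℝ → ℝ)
    (hnonneg : ∀ k, k₀ ≤ k → 0 ≤ φ k)
    (hmono : ∀ k h, k₀ ≤ k → k ≤ h → φ h ≤ φ k)
    (hiter : ∀ k h, k₀ ≤ k → k < h → φ h ≤ C * (h - k) ^ (-p) * φ k ^ γ)
    (d : ℝ) (hd0 : 0 ≤ d)
    (hd : d ^ p = C * φ k₀ ^ (γ - 1) * (2 : ℝ) ^ (p * γ / (γ - 1))) :
    φ (k₀ + d) = 0 := by
  have hγ1 : (0:ℝ) < γ - 1 := by linarith
  have hM0 : 0 ≤ φ k₀ := hnonneg k₀ le_rfl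
  rcases eq_or_lt_of_le hM0 with hM0' | hMpos
  · -- φ k₀ = 0, then d = 0
    have hz : φ k₀ ^ (γ - 1) = 0 := by
      rw [← hM0']; exact Real.zero_rpow (by linarith)
    have hdp : d ^ p = 0 := by rw [hd, hz]; ring
    have hd' : d = 0 := by
      by_contra h
      have hdpos : (0:ℝ) < d := lt_of_le_of_ne hd0 (Ne.symm h)
      exact absurd hdp (ne_of_gt (Real.rpow_pos_of_pos hdpos p))
    rw [hd', add_zero, ← hM0']
  · -- main case: φ k₀ > 0, hence d > 0
    set M := φ k₀ with hM
    have hdppos : (0:ℝ) < d ^ p := by rw [hd]; positivity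
    have hdpos : (0:ℝ) < d := by
      rcases eq_or_lt_of_le hd0 with h | h
      · exfalso; rw [← h, Real.zero_rpow (ne_of_gt hp)] at hdppos; exact lt_irrefl 0 hdppos
      · exact h
    obtain ⟨μ, hμ⟩ : ∃ μ : ℝ, μ = p / (γ - 1) := ⟨_, rfl⟩
    have hμpos : 0 < μ := hμ ▸ div_pos hp hγ1
    have hdlog : p * Real.log d =
        Real.log C + (γ - 1) * Real.log M + (p * γ / (γ - 1)) * Real.log 2 := by
      have h := congrArg Real.log hd
      rw [Real.log_rpow hdpos, Real.log_mul (by positivity) (by positivity),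
        Real.log_mul (ne_of_gt hC) (by positivity),
        Real.log_rpow hMpos, Real.log_rpow (by norm_num : (0:ℝ) < 2)] at h
      linarith
    -- key induction
    have key : ∀ n : ℕ, φ (k₀ + d * (1 - (2:ℝ) ^ (-(n:ℝ)))) ≤ M * (2:ℝ) ^ (-((n:ℝ) * μ)) := by
      intro n
      induction n with
      | zero => simp [hM]
      | succ n ih =>
        set k := k₀ + d * (1 - (2:ℝ) ^ (-(n:ℝ))) with hk
        set h := k₀ + d * (1 - (2:ℝ) ^ (-((n:ℝ)+1))) with hh
        have h2n : (0:ℝ) < (2:ℝ) ^ (-(n:ℝ)) := Real.rpow_pos_of_pos (by norm_num) _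
        have h2le1 : (2:ℝ) ^ (-(n:ℝ)) ≤ 1 :=
          Real.rpow_le_one_of_one_le_of_nonpos (by norm_num)
            (neg_nonpos.mpr (Nat.cast_nonneg n))
        have hk0 : k₀ ≤ k := by rw [hk]; nlinarith
        have hhalf : (2:ℝ) ^ (-((n:ℝ)+1)) = (2:ℝ) ^ (-(n:ℝ)) / 2 := by
          rw [show -((n:ℝ)+1) = -(n:ℝ) + (-1) by ring, Real.rpow_add (by norm_num),
            Real.rpow_neg_one]
          ring
        have hkh : k < h := by rw [hk, hh, hhalf]; nlinarith
        have hdiff : h - k = d * (2:ℝ) ^ (-((n:ℝ)+1)) := by rw [hk, hh, hhalf]; ring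
        have hφk : 0 ≤ φ k := hnonneg k hk0
        have step := hiter k h hk0 hkh
        rw [hdiff] at step
        have bound2 : φ k ^ γ ≤ (M * (2:ℝ) ^ (-((n:ℝ) * μ))) ^ γ :=
          Real.rpow_le_rpow hφk ih (by linarith)
        have pos1 : (0:ℝ) < C * (d * (2:ℝ) ^ (-((n:ℝ)+1))) ^ (-p) := by positivity
        have chain : φ h ≤ C * (d * (2:ℝ) ^ (-((n:ℝ)+1))) ^ (-p) *
            (M * (2:ℝ) ^ (-((n:ℝ) * μ))) ^ γ :=
          le_trans step (mul_le_mul_of_nonneg_left bound2 (le_of_lt pos1))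
        have eq1 : C * (d * (2:ℝ) ^ (-((n:ℝ)+1))) ^ (-p) *
            (M * (2:ℝ) ^ (-((n:ℝ) * μ))) ^ γ = M * (2:ℝ) ^ (-(((n:ℝ)+1) * μ)) := by
          have posL : (0:ℝ) < C * (d * (2:ℝ) ^ (-((n:ℝ)+1))) ^ (-p) *
              (M * (2:ℝ) ^ (-((n:ℝ) * μ))) ^ γ := by positivity
          have posR : (0:ℝ) < M * (2:ℝ) ^ (-(((n:ℝ)+1) * μ)) := by positivity
          have e1 : Real.log ((d * (2:ℝ) ^ (-((n:ℝ)+1))) ^ (-p)) =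
              -p * (Real.log d + (-((n:ℝ)+1)) * Real.log 2) := by
            rw [Real.log_rpow (by positivity), Real.log_mul (ne_of_gt hdpos) (by positivity),
              Real.log_rpow (by norm_num)]
          have e2 : Real.log ((M * (2:ℝ) ^ (-((n:ℝ) * μ))) ^ γ) =
              γ * (Real.log M + (-((n:ℝ) * μ)) * Real.log 2) := by
            rw [Real.log_rpow (by positivity), Real.log_mul (ne_of_gt hMpos) (by positivity),
              Real.log_rpow (by norm_num)]
          have hlog : Real.log (C * (d * (2:ℝ) ^ (-((n:ℝ)+1))) ^ (-p) *
              (M * (2:ℝ) ^ (-((n:ℝ) * μ))) ^ γ) =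
              Real.log (M * (2:ℝ) ^ (-(((n:ℝ)+1) * μ))) := by
            rw [Real.log_mul (by positivity) (by positivity),
              Real.log_mul (ne_of_gt hC) (by positivity), e1, e2,
              Real.log_mul (ne_of_gt hMpos) (by positivity),
              Real.log_rpow (by norm_num)]
            rw [hμ]
            have hdlog' : (γ - 1) * (p * Real.log d) =
                (γ - 1) * (Real.log C + (γ - 1) * Real.log M) + p * γ * Real.log 2 := by
              rw [hdlog]
              field_simp
            field_simp
            linear_combination (-1 : ℝ) * hdlog'
          calc C * (d * (2:ℝ) ^ (-((n:ℝ)+1))) ^ (-p) * (M * (2:ℝ) ^ (-((n:ℝ) * μ))) ^ γ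
              = Real.exp (Real.log (C * (d * (2:ℝ) ^ (-((n:ℝ)+1))) ^ (-p) *
                (M * (2:ℝ) ^ (-((n:ℝ) * μ))) ^ γ)) := (Real.exp_log posL).symm
            _ = Real.exp (Real.log (M * (2:ℝ) ^ (-(((n:ℝ)+1) * μ)))) := by rw [hlog]
            _ = M * (2:ℝ) ^ (-(((n:ℝ)+1) * μ)) := Real.exp_log posR
        have hfin : φ h ≤ M * (2:ℝ) ^ (-(((n:ℝ)+1) * μ)) := by rw [← eq1]; exact chain
        convert hfin using 3 <;> push_cast <;> ring
    -- pass to the limit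
    have hkle : ∀ n : ℕ, φ (k₀ + d) ≤ M * (2:ℝ) ^ (-((n:ℝ) * μ)) := by
      intro n
      have h2n : (0:ℝ) < (2:ℝ) ^ (-(n:ℝ)) := Real.rpow_pos_of_pos (by norm_num) _
      have h2le1 : (2:ℝ) ^ (-(n:ℝ)) ≤ 1 :=
        Real.rpow_le_one_of_one_le_of_nonpos (by norm_num)
          (neg_nonpos.mpr (Nat.cast_nonneg n))
      have hk0 : k₀ ≤ k₀ + d * (1 - (2:ℝ) ^ (-(n:ℝ))) := by nlinarith
      have hle : k₀ + d * (1 - (2:ℝ) ^ (-(n:ℝ))) ≤ k₀ + d := by nlinarith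
      exact le_trans (hmono _ _ hk0 hle) (key n)
    have hc1 : (2:ℝ) ^ (-μ) < 1 :=
      Real.rpow_lt_one_of_one_lt_of_neg (by norm_num) (by linarith)
    have hc0 : (0:ℝ) ≤ (2:ℝ) ^ (-μ) := le_of_lt (Real.rpow_pos_of_pos (by norm_num) _)
    have hrw : ∀ n : ℕ, M * (2:ℝ) ^ (-((n:ℝ) * μ)) = M * ((2:ℝ) ^ (-μ)) ^ n := by
      intro n
      rw [← Real.rpow_natCast ((2:ℝ) ^ (-μ)) n, ← Real.rpow_mul (by norm_num)]
      congr 1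
      ring
    have htend : Filter.Tendsto (fun n : ℕ => M * ((2:ℝ) ^ (-μ)) ^ n)
        Filter.atTop (nhds 0) := by
      have h0 := tendsto_pow_atTop_nhds_zero_of_lt_one hc0 hc1
      have h1 := h0.const_mul M
      simpa using h1
    have hle0 : φ (k₀ + d) ≤ 0 := by
      apply ge_of_tendsto' htend
      intro n
      rw [← hrw n]
      exact hkle n
    exact le_antisymm hle0 (hnonneg _ (by linarith))
end

section
/- Two-parameter Stampacchia lemma: Let a(k, r) be nonnegative, nonincreasing in k and nondecreasing in r, defined for k ≥ k₀ and 0 < r ≤ R₀. Suppose there exist C > 0, p > 0, and γ > 1 such that for all h > k ≥ k₀ and 0 < r < R ≤ R₀ one has (h − k)^p (R − r)^2 a(h, r) ≤ C a(k, R)^γ. Then for any ϑ ∈ (0,1), a(k₀ + d, ϑ R₀) = 0 where d^p = 2^{(p+2)γ/(γ−1)} C a(k₀, R₀)^{γ−1} / ((1 − ϑ)^2 R₀^2). -/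
open Real Filter

/-- Two-parameter Stampacchia lemma. -/
theorem stampacchia_two_parameter
    (k₀ R₀ C p γ : ℝ) (hR₀ : 0 < R₀) (hC : 0 < C) (hp : 0 < p) (hγ : 1 < γ)
    (a : ℝ → ℝ → ℝ)
    (hnonneg : ∀ k r, k₀ ≤ k → 0 < r → r ≤ R₀ → 0 ≤ a k r)
    (hmono_k : ∀ k h r, k₀ ≤ k → k ≤ h → 0 < r → r ≤ R₀ → a h r ≤ a k r)
    (hmono_r : ∀ k r R, k₀ ≤ k → 0 < r → r ≤ R → R ≤ R₀ → a k r ≤ a k R)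
    (hiter : ∀ k h r R, k₀ ≤ k → k < h → 0 < r → r < R → R ≤ R₀ →
      (h - k) ^ p * (R - r) ^ 2 * a h r ≤ C * a k R ^ γ)
    (ϑ : ℝ) (hϑ : ϑ ∈ Set.Ioo (0 : ℝ) 1)
    (d : ℝ) (hd0 : 0 ≤ d)
    (hd : d ^ p = (2 : ℝ) ^ ((p + 2) * γ / (γ - 1)) * C * a k₀ R₀ ^ (γ - 1)
        / ((1 - ϑ) ^ 2 * R₀ ^ 2)) :
    a (k₀ + d) (ϑ * R₀) = 0 := by
  obtain ⟨hϑ0, hϑ1⟩ := hϑ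
  have hϑR : 0 < ϑ * R₀ := mul_pos hϑ0 hR₀
  have h1ϑ : 0 < 1 - ϑ := by linarith
  have hϑRle : ϑ * R₀ ≤ R₀ := by nlinarith
  have ha₀nn : 0 ≤ a k₀ R₀ := hnonneg k₀ R₀ le_rfl hR₀ le_rfl
  have hγ1 : 0 < γ - 1 := by linarith
  rcases eq_or_lt_of_le ha₀nn with h0 | hApos
  · -- case a k₀ R₀ = 0
    have hdp : d ^ p = 0 := by
      rw [hd, ← h0, Real.zero_rpow (by linarith : γ - 1 ≠ 0)]
      ring
    have hd' : d = 0 := by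
      by_contra hne
      have hdpos : 0 < d := lt_of_le_of_ne hd0 (Ne.symm hne)
      exact absurd hdp (ne_of_gt (Real.rpow_pos_of_pos hdpos p))
    have h1 : a (k₀ + d) (ϑ * R₀) ≤ a k₀ R₀ := by
      rw [hd', add_zero]
      exact hmono_r k₀ (ϑ * R₀) R₀ le_rfl hϑR hϑRle le_rfl
    have h2 := hnonneg (k₀ + d) (ϑ * R₀) (by linarith) hϑR hϑRle
    linarith
  · -- main case : a k₀ R₀ > 0
    set A := a k₀ R₀ with hA
    set μ := (p + 2) / (γ - 1) with hμ
    have hμpos : 0 < μ := div_pos (by linarith) hγ1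
    have hdpos : 0 < d := by
      rcases lt_or_eq_of_le hd0 with h | h
      · exact h
      · exfalso
        rw [← h, Real.zero_rpow hp.ne'] at hd
        have hpos : 0 < (2 : ℝ) ^ ((p + 2) * γ / (γ - 1)) * C * A ^ (γ - 1)
            / ((1 - ϑ) ^ 2 * R₀ ^ 2) := by positivity
        linarith
    -- key identity
    have hkey : d ^ p * ((1 - ϑ) ^ 2 * R₀ ^ 2) = (2 : ℝ) ^ (μ * γ) * C * A ^ (γ - 1) := by
      rw [hd, div_mul_cancel₀ _ (by positivity : (1 - ϑ) ^ 2 * R₀ ^ 2 ≠ 0)]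
      congr 2
      rw [hμ, div_mul_eq_mul_div]
    -- sequences
    set K : ℕ → ℝ := fun n => k₀ + d - d * (2 : ℝ) ^ (-(n : ℝ)) with hK
    set r : ℕ → ℝ := fun n => ϑ * R₀ + (1 - ϑ) * R₀ * (2 : ℝ) ^ (-(n : ℝ)) with hr
    have hs_pos : ∀ n : ℕ, (0 : ℝ) < (2 : ℝ) ^ (-(n : ℝ)) := fun n =>
      Real.rpow_pos_of_pos two_pos _
    have hs_le1 : ∀ n : ℕ, (2 : ℝ) ^ (-(n : ℝ)) ≤ 1 := fun n =>
      Real.rpow_le_one_of_one_le_of_nonpos one_le_two (neg_nonpos.mpr (Nat.cast_nonneg n))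
    have hs_succ : ∀ n : ℕ, (2 : ℝ) ^ (-((n + 1 : ℕ) : ℝ)) = (2 : ℝ) ^ (-(n : ℝ)) / 2 := by
      intro n
      push_cast
      rw [neg_add, Real.rpow_add two_pos, Real.rpow_neg_one]
      ring
    have hK0 : ∀ n, k₀ ≤ K n := by
      intro n
      have := hs_le1 n
      simp only [hK]
      nlinarith
    have hKd : ∀ n, K n ≤ k₀ + d := by
      intro n
      have := hs_pos n
      simp only [hK]
      nlinarith
    have hKlt : ∀ n, K n < K (n + 1) := by
      intro n
      simp only [hK, hs_succ n]
      have := hs_pos n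
      nlinarith
    have hr_pos : ∀ n, 0 < r n := by
      intro n
      have := hs_pos n
      simp only [hr]
      nlinarith
    have hr_le : ∀ n, r n ≤ R₀ := by
      intro n
      have := hs_le1 n
      simp only [hr]
      nlinarith
    have hr_lt : ∀ n, r (n + 1) < r n := by
      intro n
      simp only [hr, hs_succ n]
      have := hs_pos n
      nlinarith [mul_pos (mul_pos h1ϑ hR₀) (hs_pos n)]
    have hϑr : ∀ n, ϑ * R₀ ≤ r n := by
      intro n
      have := hs_pos n
      simp only [hr]
      nlinarith
    set x : ℝ := (2 : ℝ) ^ (-μ) with hx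
    have hx0 : 0 ≤ x := le_of_lt (Real.rpow_pos_of_pos two_pos _)
    have hx1 : x < 1 := Real.rpow_lt_one_of_one_lt_of_neg one_lt_two (by linarith)
    have hxpow : ∀ m : ℕ, x ^ m = (2 : ℝ) ^ (-(μ * m)) := by
      intro m
      rw [hx, ← Real.rpow_natCast ((2 : ℝ) ^ (-μ)) m, ← Real.rpow_mul (by norm_num : (0:ℝ) ≤ 2)]
      ring_nf
    -- main induction
    have main : ∀ n : ℕ, a (K n) (r n) ≤ A * x ^ n := by
      intro n
      induction n with
      | zero =>
        have e1 : K 0 = k₀ := by simp [hK]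
        have e2 : r 0 = R₀ := by simp [hr]; ring
        rw [e1, e2, pow_zero, mul_one]
      | succ n ih =>
        have hb1 := hiter (K n) (K (n + 1)) (r (n + 1)) (r n) (hK0 n) (hKlt n)
          (hr_pos (n + 1)) (hr_lt n) (hr_le n)
        set s : ℝ := (2 : ℝ) ^ (-((n + 1 : ℕ) : ℝ)) with hs
        have hspos : 0 < s := hs_pos (n + 1)
        have e1 : K (n + 1) - K n = d * s := by
          simp only [hK, hs, hs_succ n]
          ring
        have e2 : r n - r (n + 1) = (1 - ϑ) * R₀ * s := by
          simp only [hr, hs, hs_succ n]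
          ring
        rw [e1, e2, Real.mul_rpow hd0 hspos.le,
          (by ring : ((1 - ϑ) * R₀ * s) ^ 2 = (1 - ϑ) ^ 2 * R₀ ^ 2 * s ^ 2)] at hb1
        have hD : (0 : ℝ) < d ^ p * s ^ p * ((1 - ϑ) ^ 2 * R₀ ^ 2 * s ^ 2) := by positivity
        -- power identities
        have hsp : s ^ p = (2 : ℝ) ^ (-((n + 1 : ℕ) : ℝ) * p) := by
          rw [hs, ← Real.rpow_mul (by norm_num : (0:ℝ) ≤ 2)]
        have hs2 : s ^ (2 : ℕ) = (2 : ℝ) ^ (-((n + 1 : ℕ) : ℝ) * 2) := by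
          rw [hs, ← Real.rpow_natCast ((2:ℝ) ^ (-((n + 1 : ℕ) : ℝ))) 2,
            ← Real.rpow_mul (by norm_num : (0:ℝ) ≤ 2)]
          norm_num
        have hA' : A ^ (γ - 1) * A = A ^ γ := by
          nth_rewrite 2 [← Real.rpow_one A]
          rw [← Real.rpow_add hApos]
          norm_num
        have h2prod : (2 : ℝ) ^ (μ * γ) * (2 : ℝ) ^ (-((n + 1 : ℕ) : ℝ) * p)
            * (2 : ℝ) ^ (-((n + 1 : ℕ) : ℝ) * 2) * (2 : ℝ) ^ (-(μ * ((n + 1 : ℕ) : ℝ)))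
            = (2 : ℝ) ^ (-(μ * (n : ℝ)) * γ) := by
          rw [← Real.rpow_add two_pos, ← Real.rpow_add two_pos, ← Real.rpow_add two_pos]
          congr 1
          rw [hμ]
          push_cast
          field_simp
          ring
        have hEq : d ^ p * s ^ p * ((1 - ϑ) ^ 2 * R₀ ^ 2 * s ^ 2) * (A * x ^ (n + 1))
            = C * (A * x ^ n) ^ γ := by
          rw [Real.mul_rpow hApos.le (pow_nonneg hx0 n), hxpow (n + 1), hxpow n, hsp,
            (by norm_num : s ^ 2 = s ^ (2 : ℕ)), hs2]
          calc d ^ p * (2:ℝ) ^ (-((n + 1 : ℕ) : ℝ) * p)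
              * ((1 - ϑ) ^ 2 * R₀ ^ 2 * (2:ℝ) ^ (-((n + 1 : ℕ) : ℝ) * 2))
              * (A * (2:ℝ) ^ (-(μ * ((n + 1 : ℕ) : ℝ))))
              = d ^ p * ((1 - ϑ) ^ 2 * R₀ ^ 2)
                * ((2:ℝ) ^ (-((n + 1 : ℕ) : ℝ) * p) * (2:ℝ) ^ (-((n + 1 : ℕ) : ℝ) * 2)
                  * (2:ℝ) ^ (-(μ * ((n + 1 : ℕ) : ℝ)))) * A := by ring
            _ = (2:ℝ) ^ (μ * γ) * C * A ^ (γ - 1)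
                * ((2:ℝ) ^ (-((n + 1 : ℕ) : ℝ) * p) * (2:ℝ) ^ (-((n + 1 : ℕ) : ℝ) * 2)
                  * (2:ℝ) ^ (-(μ * ((n + 1 : ℕ) : ℝ)))) * A := by rw [hkey]
            _ = C * (A ^ (γ - 1) * A)
                * ((2:ℝ) ^ (μ * γ) * (2:ℝ) ^ (-((n + 1 : ℕ) : ℝ) * p)
                  * (2:ℝ) ^ (-((n + 1 : ℕ) : ℝ) * 2)
                  * (2:ℝ) ^ (-(μ * ((n + 1 : ℕ) : ℝ)))) := by ring
            _ = C * A ^ γ * ((2:ℝ) ^ (-(μ * (n : ℝ)))) ^ γ := by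
                rw [hA', h2prod,
                  ← Real.rpow_mul (by norm_num : (0:ℝ) ≤ 2) (-(μ * (n:ℝ))) γ]
            _ = C * (A ^ γ * ((2:ℝ) ^ (-(μ * (n : ℝ)))) ^ γ) := by ring
        have hrhs : C * a (K n) (r n) ^ γ ≤ C * (A * x ^ n) ^ γ := by
          apply mul_le_mul_of_nonneg_left _ hC.le
          exact Real.rpow_le_rpow (hnonneg _ _ (hK0 n) (hr_pos n) (hr_le n)) ih
            (by linarith)
        have hfin := hb1.trans hrhs
        rw [← hEq] at hfin
        exact le_of_mul_le_mul_left hfin hD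
    -- pass to the limit
    have hle : ∀ n : ℕ, a (k₀ + d) (ϑ * R₀) ≤ A * x ^ n := by
      intro n
      calc a (k₀ + d) (ϑ * R₀) ≤ a (K n) (ϑ * R₀) :=
            hmono_k (K n) (k₀ + d) (ϑ * R₀) (hK0 n) (hKd n) hϑR hϑRle
        _ ≤ a (K n) (r n) := hmono_r (K n) (ϑ * R₀) (r n) (hK0 n) hϑR (hϑr n) (hr_le n)
        _ ≤ A * x ^ n := main n
    have hlim : Tendsto (fun n : ℕ => A * x ^ n) atTop (nhds 0) := by
      have := (tendsto_pow_atTop_nhds_zero_of_lt_one hx0 hx1).const_mul A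
      simpa using this
    have hle0 : a (k₀ + d) (ϑ * R₀) ≤ 0 :=
      ge_of_tendsto hlim (Eventually.of_forall hle)
    exact le_antisymm hle0 (hnonneg _ _ (by linarith) hϑR hϑRle)
end
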